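/- Let s = −2, and for v, w > 0 define K(v,w) = {(x,y) ∈ ℝ² : 0 ≤ x ≤ v and w ≤ y ≤ w + v − x}. If (α, β) is a solution of the system on an interval J with β(t) > 0 for all t ∈ J, and l ∈ J satisfies α(l) > 0, then for every t ∈ J with t ≥ l one has (α(t), β(t)) ∈ K(α(l), β(l)); that is, 0 ≤ α(t) ≤ α(l) and β(l) ≤ β(t) ≤ β(l) + α(l) − α(t). -/

import Mathlib

/-! Along a solution, `α' = c · α` with `c = -(9/32) α²/β⁴ + (s/4) α/β³ - 1/(4β²)`
continuous, so by uniqueness for this linear equation `α` can never reach the zero solution: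
`α` stays positive. For `s = -2`, `α ≥ 0` and `β > 0` the vector field satisfies `α' ≤ 0`,
`β' ≥ 0` and `α' + β' ≤ 0`; these three monotonicities are exactly the inequalities defining
`K(α(l), β(l))`. -/

open Real Filter Set Topology
open scoped ENNReal

/-- The vector field of the spinor-flow ODE system on Berger spheres,
with parameter `s = aλ ∈ {2, -2}`. -/
noncomputable def F (s x y : ℝ) : ℝ × ℝ :=
  (-(9/32) * x^3 / y^4 + (s/4) * x^2 / y^3 - (1/4) * x / y^2,
   (3/32) * x^2 / y^3 - (s/16) * x / y^2)

/-- `(α, β)` is a solution of the system on the set `J`, with `β` never zero. -/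
def IsSolutionOn (s : ℝ) (α β : ℝ → ℝ) (J : Set ℝ) : Prop :=
  ∀ t ∈ J, β t ≠ 0 ∧
    HasDerivAt α (F s (α t) (β t)).1 t ∧
    HasDerivAt β (F s (α t) (β t)).2 t

theorem eqOn_zero_of_hasDerivAt_smul_self_of_eq_zero_right {E : Type*}
    [NormedAddCommGroup E] [NormedSpace ℝ E] {f : ℝ → E} {c : ℝ → ℝ} {a b : ℝ}
    (hc : ContinuousOn c (Icc a b))
    (hf : ∀ t ∈ Icc a b, HasDerivAt f (c t • f t) t) (hb : f b = 0) :
    EqOn f 0 (Icc a b) := by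
  obtain ⟨C, hC⟩ := isCompact_Icc.exists_bound_of_continuousOn hc
  have hlip : ∀ t ∈ Ioc a b, LipschitzOnWith C.toNNReal (c t • ·) (univ : Set E) :=
    fun t ht ↦ ((lipschitzWith_smul (c t)).weaken (by
      rw [← NNReal.coe_le_coe, coe_nnnorm, Real.coe_toNNReal']
      exact le_max_of_le_left (hC t (Ioc_subset_Icc_self ht)))).lipschitzOnWith
  exact ODE_solution_unique_of_mem_Icc_left hlip
    (fun t ht ↦ (hf t ht).continuousAt.continuousWithinAt)
    (fun t ht ↦ (hf t (Ioc_subset_Icc_self ht)).hasDerivWithinAt) (fun _ _ ↦ mem_univ _)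
    continuousOn_const
    (fun t _ ↦ by rw [Pi.zero_apply, smul_zero]; exact hasDerivWithinAt_const t _ _)
    (fun _ _ ↦ mem_univ _) hb

theorem pos_of_hasDerivAt_mul_self {f c : ℝ → ℝ} {a b : ℝ} (hc : ContinuousOn c (Icc a b))
    (hf : ∀ t ∈ Icc a b, HasDerivAt f (c t * f t) t) (ha : 0 < f a) :
    ∀ t ∈ Icc a b, 0 < f t := by
  by_contra! ⟨t, ht, hft⟩
  have hsub : Icc a t ⊆ Icc a b := Icc_subset_Icc_right ht.2
  obtain ⟨t₀, ht₀, hft₀⟩ := intermediate_value_Icc' ht.1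
    (fun u hu ↦ (hf u (hsub hu)).continuousAt.continuousWithinAt) ⟨hft, ha.le⟩
  have hsub₀ : Icc a t₀ ⊆ Icc a b := (Icc_subset_Icc_right ht₀.2).trans hsub
  have := eqOn_zero_of_hasDerivAt_smul_self_of_eq_zero_right (hc.mono hsub₀)
    (fun u hu ↦ hf u (hsub₀ hu)) hft₀ (left_mem_Icc.2 ht₀.1)
  simp [this] at ha

theorem Convex.monotoneOn_of_hasDerivAt_nonneg {D : Set ℝ} (hD : Convex ℝ D)
    {f f' : ℝ → ℝ} (hf : ∀ x ∈ D, HasDerivAt f (f' x) x) (hf' : ∀ x ∈ D, 0 ≤ f' x) :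
    MonotoneOn f D :=
  monotoneOn_of_hasDerivWithinAt_nonneg hD
    (fun x hx ↦ (hf x hx).continuousAt.continuousWithinAt)
    (fun x hx ↦ (hf x (interior_subset hx)).hasDerivWithinAt)
    (fun x hx ↦ hf' x (interior_subset hx))

theorem Convex.antitoneOn_of_hasDerivAt_nonpos {D : Set ℝ} (hD : Convex ℝ D)
    {f f' : ℝ → ℝ} (hf : ∀ x ∈ D, HasDerivAt f (f' x) x) (hf' : ∀ x ∈ D, f' x ≤ 0) :
    AntitoneOn f D :=
  antitoneOn_of_hasDerivWithinAt_nonpos hD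
    (fun x hx ↦ (hf x hx).continuousAt.continuousWithinAt)
    (fun x hx ↦ (hf x (interior_subset hx)).hasDerivWithinAt)
    (fun x hx ↦ hf' x (interior_subset hx))

theorem F_fst_eq_mul (s x y : ℝ) :
    (F s x y).1 = (-(9/32) * x^2 / y^4 + s/4 * x / y^3 - 1/4 / y^2) * x := by
  simp only [F]; ring

theorem F_neg_two_fst_nonpos {x y : ℝ} (hx : 0 ≤ x) (hy : 0 < y) : (F (-2) x y).1 ≤ 0 := by
  have : 0 ≤ 9/32 * x^3/y^4 + 1/2 * x^2/y^3 + 1/4 * x/y^2 := by positivity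
  simp only [F]; linear_combination this

theorem F_neg_two_snd_nonneg {x y : ℝ} (hx : 0 ≤ x) (hy : 0 < y) : 0 ≤ (F (-2) x y).2 := by
  have : 0 ≤ 3/32 * x^2/y^3 + 1/8 * x/y^2 := by positivity
  simp only [F]; linear_combination this

theorem F_neg_two_fst_add_snd_nonpos {x y : ℝ} (hx : 0 ≤ x) (hy : 0 < y) :
    (F (-2) x y).1 + (F (-2) x y).2 ≤ 0 := by
  have : 0 ≤ 9/32 * x^3/y^4 + 13/32 * x^2/y^3 + 1/8 * x/y^2 := by positivity
  simp only [F]; linear_combination this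

namespace IsSolutionOn

variable {s : ℝ} {α β : ℝ → ℝ} {J : Set ℝ}

theorem fst_pos_of_pos (hsol : IsSolutionOn s α β J) (hJ : J.OrdConnected) {l t : ℝ}
    (hl : l ∈ J) (ht : t ∈ J) (hαl : 0 < α l) : ∀ u ∈ Icc l t, 0 < α u := by
  have hIcc : Icc l t ⊆ J := hJ.out hl ht
  refine pos_of_hasDerivAt_mul_self
    (c := fun u ↦ -(9/32) * α u ^ 2 / β u ^ 4 + s/4 * α u / β u ^ 3 - 1/4 / β u ^ 2) ?_
    (fun u hu ↦ (hsol u (hIcc hu)).2.1.congr_deriv (F_fst_eq_mul _ _ _)) hαl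
  intro u hu
  obtain ⟨hβu, hα', hβ'⟩ := hsol u (hIcc hu)
  have := hα'.continuousAt
  have := hβ'.continuousAt
  exact ContinuousAt.continuousWithinAt (by fun_prop (disch := simp [hβu]))

variable {D : Set ℝ} (hsol : IsSolutionOn (-2) α β J) (hβ : ∀ t ∈ J, 0 < β t)
  (hD : Convex ℝ D) (hDJ : D ⊆ J) (hα : ∀ u ∈ D, 0 ≤ α u)
include hsol hβ hD hDJ hα

theorem antitoneOn_fst : AntitoneOn α D :=
  hD.antitoneOn_of_hasDerivAt_nonpos (fun u hu ↦ (hsol u (hDJ hu)).2.1)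
    fun u hu ↦ F_neg_two_fst_nonpos (hα u hu) (hβ u (hDJ hu))

theorem monotoneOn_snd : MonotoneOn β D :=
  hD.monotoneOn_of_hasDerivAt_nonneg (fun u hu ↦ (hsol u (hDJ hu)).2.2)
    fun u hu ↦ F_neg_two_snd_nonneg (hα u hu) (hβ u (hDJ hu))

theorem antitoneOn_fst_add_snd : AntitoneOn (α + β) D :=
  hD.antitoneOn_of_hasDerivAt_nonpos
    (fun u hu ↦ (hsol u (hDJ hu)).2.1.add (hsol u (hDJ hu)).2.2)
    fun u hu ↦ F_neg_two_fst_add_snd_nonpos (hα u hu) (hβ u (hDJ hu))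

end IsSolutionOn

theorem trapped_in_K (J : Set ℝ) (hJ : J.OrdConnected) (α β : ℝ → ℝ)
    (hsol : IsSolutionOn (-2) α β J) (hβ : ∀ t ∈ J, 0 < β t)
    (l : ℝ) (hl : l ∈ J) (hαl : 0 < α l) :
    ∀ t ∈ J, l ≤ t →
      0 ≤ α t ∧ α t ≤ α l ∧ β l ≤ β t ∧ β t ≤ β l + α l - α t := by
  intro t ht hlt
  have hIcc : Icc l t ⊆ J := hJ.out hl ht
  have hα : ∀ u ∈ Icc l t, 0 ≤ α u :=
    fun u hu ↦ (hsol.fst_pos_of_pos hJ hl ht hαl u hu).le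
  have hl' : l ∈ Icc l t := left_mem_Icc.2 hlt
  have ht' : t ∈ Icc l t := right_mem_Icc.2 hlt
  have hsum := hsol.antitoneOn_fst_add_snd hβ (convex_Icc l t) hIcc hα hl' ht' hlt
  simp only [Pi.add_apply] at hsum
  exact ⟨hα t ht', hsol.antitoneOn_fst hβ (convex_Icc l t) hIcc hα hl' ht' hlt,
    hsol.monotoneOn_snd hβ (convex_Icc l t) hIcc hα hl' ht' hlt, by linarith⟩
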